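/- arXiv:2310.03853 — 4 statements merged into one kernel-verified Lean document; each statement's English description precedes it below -/
import Mathlib

section
/- Let X be a measurable space equipped with a sigma-finite measure lambda, V : X -> [1,infinity) measurable, q a bounded positive proposal density, and let mu, nu be probability measures with everywhere positive bounded densities with respect to lambda satisfying ∫ V dmu < infinity and ∫ V dnu < infinity. Fix x in X. Then, with P_mu, P_nu the Metropolis-Hastings kernels with invariant distributions mu, nu (the Hastings kernels with balancing function g(u) = min(1,u)): sup over measurable f with ||f||_V <= 1 of |P_mu(x,f) - P_nu(x,f)| is at most M_x * ||mu - nu||_V + Mperp_x * |mu(x) - nu(x)|, where M_x := ∫_0^1 sup_y [ (V(y)+V(x)) q(y,x) / (mu_t(x) V(y)) ] dt and Mperp_x := ∫_0^1 ∫ (V(x)+V(z)) (mu_t(z)/mu_t(x)^2) q(z,x) * 1{ mu_t(z) q(z,x) <= mu_t(x) q(x,z) } lambda(dz) dt. -/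
open MeasureTheory ProbabilityTheory ENNReal

/-- The Hastings ratio `r_μ(x,y) = μ(y)q(y,x) / (μ(x)q(x,y))` for a target density `p`. -/
noncomputable def hastingsRatio {X : Type*} (q : X → X → ℝ) (p : X → ℝ) (x y : X) : ℝ :=
  p y * q y x / (p x * q x y)

/-- The Metropolis–Hastings kernel (Hastings kernel with balancing function
`g(u) = min 1 u`), with proposal density `q` and invariant density `p`. -/
noncomputable def mhKernelFun {X : Type*} [MeasurableSpace X] (lam : Measure X)
    (q : X → X → ℝ) (p : X → ℝ) (x : X) (f : X → ℝ) : ℝ :=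
  (∫ y, f y * min 1 (hastingsRatio q p x y) * q x y ∂lam)
    + f x * (1 - ∫ y, min 1 (hastingsRatio q p x y) * q x y ∂lam)

/-- The `V`-norm `‖μ - ν‖_V = sup { |∫ f dμ - ∫ f dν| : f measurable, ‖f‖_V ≤ 1 }`. -/
noncomputable def vDistE {X : Type*} [MeasurableSpace X] (V : X → ℝ) (μ ν : Measure X) :
    ℝ≥0∞ :=
  ⨆ f : {f : X → ℝ // Measurable f ∧ ∀ x, |f x| ≤ V x},
    ENNReal.ofReal |(∫ x, f.1 x ∂μ) - ∫ x, f.1 x ∂ν|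

/-
Writing `P_μ(x, f) - P_ν(x, f)` as `∫ (f y - f x) (min 1 r_μ(x,y) - min 1 r_ν(x,y)) q(x,y) dλ(y)`,
interpolate between `μ` and `ν` by `μ_t`. For fixed `y`, `r_{μ_t}(x,y) = A_t / B_t` is a quotient
of affine functions of `t`, hence monotone in `t`, so `t ↦ min 1 r_{μ_t}(x,y)` varies by at most
`∫₀¹ |∂_t (A_t / B_t)| 1{A_t ≤ B_t} dt`. The derivative splits into a part carrying
`μ(y) - ν(y)` and a part carrying `μ(x) - ν(x)`; after integrating in `y` and exchanging the
integrals, the first is bounded through `∫ V |μ - ν| dλ ≤ ‖μ - ν‖_V` and the second gives `M⊥_x`.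
-/

open Set

theorem interp_pos {a b t : ℝ} (ha : 0 < a) (hb : 0 < b) (ht : t ∈ Icc (0 : ℝ) 1) :
    0 < (1 - t) * a + t * b := by
  simpa using convex_Ioi (0 : ℝ) ha hb (sub_nonneg.2 ht.2) ht.1 (by ring)

theorem enorm_sub_le_setLIntegral_indicator {r : ℝ → ℝ} {a b u v : ℝ}
    (hr : ContDiffOn ℝ 1 r (Icc a b)) (huv : u ≤ v) (hsub : Icc u v ⊆ Icc a b)
    (hle : ∀ t ∈ Icc u v, r t ≤ 1) :
    ‖r v - r u‖ₑ ≤ ∫⁻ t in Icc a b, {t | r t ≤ 1}.indicator (fun t => ‖deriv r t‖ₑ) t :=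
  calc ‖r v - r u‖ₑ ≤ ∫⁻ t in Icc u v, ‖deriv r t‖ₑ :=
        enorm_sub_le_lintegral_deriv_of_contDiffOn_Icc (hr.mono hsub) huv
    _ = ∫⁻ t in Icc u v, {t | r t ≤ 1}.indicator (fun t => ‖deriv r t‖ₑ) t :=
        setLIntegral_congr_fun measurableSet_Icc fun t ht =>
          (indicator_of_mem (s := {t | r t ≤ 1}) (hle t ht) (fun t => ‖deriv r t‖ₑ)).symm
    _ ≤ _ := lintegral_mono_set hsub

theorem enorm_min_one_sub_le_lintegral {r : ℝ → ℝ} {a b : ℝ} (hab : a ≤ b)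
    (hr : ContDiffOn ℝ 1 r (Icc a b))
    (hmono : MonotoneOn r (Icc a b) ∨ AntitoneOn r (Icc a b)) :
    ‖min 1 (r b) - min 1 (r a)‖ₑ
      ≤ ∫⁻ t in Icc a b, {t | r t ≤ 1}.indicator (fun t => ‖deriv r t‖ₑ) t := by
  have ha : a ∈ Icc a b := left_mem_Icc.2 hab
  have hb : b ∈ Icc a b := right_mem_Icc.2 hab
  rcases le_or_gt (r a) 1 with hra | hra <;> rcases le_or_gt (r b) 1 with hrb | hrb
  · rw [min_eq_right hra, min_eq_right hrb]
    refine enorm_sub_le_setLIntegral_indicator hr hab subset_rfl fun t ht => ?_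
    rcases hmono with h | h
    · exact (h ht hb ht.2).trans hrb
    · exact (h ha ht ht.1).trans hra
  · -- `r` crosses the level `1` upwards at some `w`, so `r ≤ 1` on `[a, w]`
    obtain ⟨w, hw, hrw⟩ := intermediate_value_Icc hab hr.continuousOn ⟨hra, hrb.le⟩
    have hmono : MonotoneOn r (Icc a b) :=
      hmono.resolve_right fun h => (h ha hb hab).not_gt (hra.trans_lt hrb)
    have key := enorm_sub_le_setLIntegral_indicator hr hw.1 (Icc_subset_Icc le_rfl hw.2)
      fun t ht => hrw ▸ hmono ⟨ht.1, ht.2.trans hw.2⟩ hw ht.2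
    rw [min_eq_right hra, min_eq_left hrb.le]
    rwa [hrw] at key
  · obtain ⟨w, hw, hrw⟩ := intermediate_value_Icc' hab hr.continuousOn ⟨hrb, hra.le⟩
    have hanti : AntitoneOn r (Icc a b) :=
      hmono.resolve_left fun h => (h ha hb hab).not_gt (hrb.trans_lt hra)
    have key := enorm_sub_le_setLIntegral_indicator hr hw.2 (Icc_subset_Icc hw.1 le_rfl)
      fun t ht => hrw ▸ hanti hw ⟨hw.1.trans ht.1, ht.2⟩ ht.1
    rw [min_eq_left hra.le, min_eq_right hrb]
    rwa [hrw] at key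
  · simp [min_eq_left hra.le, min_eq_left hrb.le]
theorem monotoneOn_or_antitoneOn_interp_div {a₀ a₁ b₀ b₁ : ℝ} (hb₀ : 0 < b₀) (hb₁ : 0 < b₁) :
    MonotoneOn (fun t => ((1 - t) * a₀ + t * a₁) / ((1 - t) * b₀ + t * b₁)) (Icc 0 1) ∨
      AntitoneOn (fun t => ((1 - t) * a₀ + t * a₁) / ((1 - t) * b₀ + t * b₁)) (Icc 0 1) := by
  -- the cross difference `A t * B s - A s * B t` equals `(t - s) * (a₁ * b₀ - a₀ * b₁)`
  rcases le_total 0 (a₁ * b₀ - a₀ * b₁) with hc | hc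
  · refine Or.inl fun s hs t ht hst => ?_
    rw [div_le_div_iff₀ (interp_pos hb₀ hb₁ hs) (interp_pos hb₀ hb₁ ht)]
    nlinarith [mul_nonneg (sub_nonneg.2 hst) hc]
  · refine Or.inr fun s hs t ht hst => ?_
    rw [div_le_div_iff₀ (interp_pos hb₀ hb₁ ht) (interp_pos hb₀ hb₁ hs)]
    nlinarith [mul_nonpos_of_nonneg_of_nonpos (sub_nonneg.2 hst) hc]

theorem hasDerivAt_interp (a₀ a₁ t : ℝ) :
    HasDerivAt (fun t => (1 - t) * a₀ + t * a₁) (a₁ - a₀) t :=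
  ((((hasDerivAt_id t).const_sub 1).mul_const a₀).add ((hasDerivAt_id t).mul_const a₁)).congr_deriv
    (by ring)

theorem hasDerivAt_interp_div {a₀ a₁ b₀ b₁ t : ℝ} (hB : (1 - t) * b₀ + t * b₁ ≠ 0) :
    HasDerivAt (fun t => ((1 - t) * a₀ + t * a₁) / ((1 - t) * b₀ + t * b₁))
      (((a₁ - a₀) * ((1 - t) * b₀ + t * b₁) - ((1 - t) * a₀ + t * a₁) * (b₁ - b₀))
        / ((1 - t) * b₀ + t * b₁) ^ 2) t :=
  (hasDerivAt_interp a₀ a₁ t).div (hasDerivAt_interp b₀ b₁ t) hB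

theorem enorm_min_one_div_sub_le {a₀ a₁ b₀ b₁ : ℝ} (ha₀ : 0 < a₀) (ha₁ : 0 < a₁)
    (hb₀ : 0 < b₀) (hb₁ : 0 < b₁) :
    ‖min 1 (a₁ / b₁) - min 1 (a₀ / b₀)‖ₑ ≤ ∫⁻ t in Icc (0 : ℝ) 1,
      (ENNReal.ofReal (|a₁ - a₀| / ((1 - t) * b₀ + t * b₁))
        + ENNReal.ofReal (((1 - t) * a₀ + t * a₁) * |b₁ - b₀| / ((1 - t) * b₀ + t * b₁) ^ 2
            * if (1 - t) * a₀ + t * a₁ ≤ (1 - t) * b₀ + t * b₁ then 1 else 0)) := by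
  set A : ℝ → ℝ := fun t => (1 - t) * a₀ + t * a₁
  set B : ℝ → ℝ := fun t => (1 - t) * b₀ + t * b₁
  have hA : ∀ t ∈ Icc (0 : ℝ) 1, 0 < A t := fun t ht => interp_pos ha₀ ha₁ ht
  have hB : ∀ t ∈ Icc (0 : ℝ) 1, 0 < B t := fun t ht => interp_pos hb₀ hb₁ ht
  have hr : ContDiffOn ℝ 1 (fun t => A t / B t) (Icc 0 1) :=
    (by fun_prop : ContDiff ℝ 1 A).contDiffOn.div (by fun_prop : ContDiff ℝ 1 B).contDiffOn
      fun t ht => (hB t ht).ne'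
  have key := enorm_min_one_sub_le_lintegral zero_le_one hr
    (monotoneOn_or_antitoneOn_interp_div hb₀ hb₁)
  simp only [A, B, sub_zero, sub_self, one_mul, zero_mul, add_zero, zero_add] at key
  refine key.trans (setLIntegral_mono' measurableSet_Icc fun t ht => ?_)
  have hAt := hA t ht
  have hBt := hB t ht
  by_cases hle : A t ≤ B t
  · have hmem : t ∈ {t | A t / B t ≤ 1} := (div_le_one hBt).2 hle
    rw [indicator_of_mem hmem, (hasDerivAt_interp_div hBt.ne').deriv, if_pos hle, mul_one,
      Real.enorm_eq_ofReal_abs, ← ENNReal.ofReal_add (div_nonneg (abs_nonneg _) hBt.le)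
        (div_nonneg (mul_nonneg hAt.le (abs_nonneg _)) (pow_nonneg hBt.le 2))]
    refine ENNReal.ofReal_le_ofReal ?_
    rw [show ((a₁ - a₀) * B t - A t * (b₁ - b₀)) / B t ^ 2
        = (a₁ - a₀) / B t - A t * (b₁ - b₀) / B t ^ 2 by field_simp]
    refine (abs_sub _ _).trans_eq ?_
    rw [abs_div, abs_div, abs_mul, abs_of_pos hBt, abs_of_pos hAt, abs_of_pos (pow_pos hBt 2)]
  · have hmem : t ∉ {t | A t / B t ≤ 1} := fun h => hle ((div_le_one hBt).1 h)
    rw [indicator_of_notMem hmem]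
    exact bot_le

section MetropolisHastings

variable {X : Type*} {q : X → X → ℝ} {x : X}

theorem enorm_min_one_hastingsRatio_sub_le {pμ pν : X → ℝ} (hqpos : ∀ x y, 0 < q x y)
    (hpμ : ∀ z, 0 < pμ z) (hpν : ∀ z, 0 < pν z) (y : X) :
    ‖min 1 (hastingsRatio q pν x y) - min 1 (hastingsRatio q pμ x y)‖ₑ
      ≤ ∫⁻ t in Icc (0 : ℝ) 1,
          (ENNReal.ofReal (|pν y - pμ y| * q y x / (((1 - t) * pμ x + t * pν x) * q x y))
            + ENNReal.ofReal (((1 - t) * pμ y + t * pν y) * q y x * (|pμ x - pν x| * q x y)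
                / (((1 - t) * pμ x + t * pν x) * q x y) ^ 2 *
                  if ((1 - t) * pμ y + t * pν y) * q y x ≤ ((1 - t) * pμ x + t * pν x) * q x y
                  then 1 else 0)) := by
  have hA : ∀ t : ℝ, (1 - t) * (pμ y * q y x) + t * (pν y * q y x)
      = ((1 - t) * pμ y + t * pν y) * q y x := fun t => by ring
  have hB : ∀ t : ℝ, (1 - t) * (pμ x * q x y) + t * (pν x * q x y)
      = ((1 - t) * pμ x + t * pν x) * q x y := fun t => by ring
  have hα : |pν y * q y x - pμ y * q y x| = |pν y - pμ y| * q y x := by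
    rw [← sub_mul, abs_mul, abs_of_pos (hqpos y x)]
  have hβ : |pν x * q x y - pμ x * q x y| = |pμ x - pν x| * q x y := by
    rw [← sub_mul, abs_mul, abs_of_pos (hqpos x y), abs_sub_comm]
  simpa only [hastingsRatio, hA, hB, hα, hβ] using
    enorm_min_one_div_sub_le (mul_pos (hpμ y) (hqpos y x)) (mul_pos (hpν y) (hqpos y x))
      (mul_pos (hpμ x) (hqpos x y)) (mul_pos (hpν x) (hqpos x y))

theorem enorm_mh_integrand_le {V f pμ pν : X → ℝ} (hV : ∀ z, 0 < V z) (hfV : ∀ y, |f y| ≤ V y)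
    (hqpos : ∀ x y, 0 < q x y) (hpμ : ∀ z, 0 < pμ z) (hpν : ∀ z, 0 < pν z) (y : X) :
    ‖(f y - f x) *
        ((min 1 (hastingsRatio q pμ x y) - min 1 (hastingsRatio q pν x y)) * q x y)‖ₑ
      ≤ ∫⁻ t in Icc (0 : ℝ) 1,
          (ENNReal.ofReal ((V y + V x) * q y x / (((1 - t) * pμ x + t * pν x) * V y))
              * ENNReal.ofReal (V y * |pν y - pμ y|)
            + ENNReal.ofReal ((V x + V y) *
                (((1 - t) * pμ y + t * pν y) / ((1 - t) * pμ x + t * pν x) ^ 2) * q y x *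
                  (if ((1 - t) * pμ y + t * pν y) * q y x ≤
                      ((1 - t) * pμ x + t * pν x) * q x y then 1 else 0))
              * ENNReal.ofReal |pμ x - pν x|) := by
  have hK : 0 ≤ (V y + V x) * q x y := mul_nonneg (add_pos (hV y) (hV x)).le (hqpos x y).le
  have hf : |f y - f x| ≤ V y + V x := (abs_sub _ _).trans (add_le_add (hfV y) (hfV x))
  calc _ ≤ ENNReal.ofReal ((V y + V x) * q x y) *
        ‖min 1 (hastingsRatio q pν x y) - min 1 (hastingsRatio q pμ x y)‖ₑ := by
        rw [Real.enorm_eq_ofReal_abs, Real.enorm_eq_ofReal_abs, ← ENNReal.ofReal_mul hK]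
        refine ENNReal.ofReal_le_ofReal ?_
        rw [abs_mul, abs_mul, abs_of_pos (hqpos x y), abs_sub_comm (min _ _)]
        exact (mul_le_mul_of_nonneg_right hf (mul_nonneg (abs_nonneg _) (hqpos x y).le)).trans_eq
          (by ring)
    _ ≤ _ := by
        refine (mul_le_mul_right (enorm_min_one_hastingsRatio_sub_le hqpos hpμ hpν y) _).trans_eq ?_
        rw [← lintegral_const_mul' _ _ ofReal_ne_top]
        refine setLIntegral_congr_fun measurableSet_Icc fun t ht => ?_
        have hpx := (interp_pos (hpμ x) (hpν x) ht).ne'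
        have hq := (hqpos x y).ne'
        have hVy := (hV y).ne'
        rw [← ofReal_mul' (mul_nonneg (hV y).le (abs_nonneg _)), ← ofReal_mul' (abs_nonneg _),
          mul_add, ← ofReal_mul hK, ← ofReal_mul hK]
        congr 2
        · field_simp
        · split_ifs
          · field_simp
            ring
          · simp

variable [MeasurableSpace X] {lam : Measure X}

theorem integrable_mul_min_one_hastingsRatio_mul {V f p : X → ℝ} {c : ℝ}
    (hqm : Measurable (Function.uncurry q)) (hqpos : ∀ x y, 0 < q x y) (hqb : ∀ y, q y x ≤ c)
    (hpm : Measurable p) (hp : ∀ z, 0 < p z) (hVp : Integrable (fun y => V y * p y) lam)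
    (hfm : Measurable f) (hfV : ∀ y, |f y| ≤ V y) :
    Integrable (fun y => f y * min 1 (hastingsRatio q p x y) * q x y) lam := by
  have hqx : Measurable (q x) := hqm.comp measurable_prodMk_left
  have hqy : Measurable fun y => q y x := hqm.comp (measurable_id.prodMk measurable_const)
  refine (hVp.const_mul (c / p x)).mono' (by unfold hastingsRatio; fun_prop)
    (ae_of_all _ fun y => ?_)
  have hr : 0 ≤ hastingsRatio q p x y :=
    div_nonneg (mul_pos (hp y) (hqpos y x)).le (mul_pos (hp x) (hqpos x y)).le
  have hbound : min 1 (hastingsRatio q p x y) * q x y ≤ c / p x * p y :=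
    calc min 1 (hastingsRatio q p x y) * q x y ≤ hastingsRatio q p x y * q x y :=
          mul_le_mul_of_nonneg_right (min_le_right _ _) (hqpos x y).le
      _ = q y x / p x * p y := by
          unfold hastingsRatio; field_simp [(hp x).ne', (hqpos x y).ne']
      _ ≤ c / p x * p y := by gcongr; exacts [(hp y).le, (hp x).le, hqb y]
  rw [norm_mul, norm_mul, Real.norm_eq_abs, Real.norm_of_nonneg (le_min zero_le_one hr),
    Real.norm_of_nonneg (hqpos x y).le, mul_assoc]
  calc |f y| * (min 1 (hastingsRatio q p x y) * q x y) ≤ V y * (c / p x * p y) :=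
        mul_le_mul (hfV y) hbound (mul_nonneg (le_min zero_le_one hr) (hqpos x y).le)
          ((abs_nonneg _).trans (hfV y))
    _ = c / p x * (V y * p y) := by ring

theorem mhKernelFun_sub_mhKernelFun {pμ pν f : X → ℝ}
    (hfμ : Integrable (fun y => f y * min 1 (hastingsRatio q pμ x y) * q x y) lam)
    (hfν : Integrable (fun y => f y * min 1 (hastingsRatio q pν x y) * q x y) lam)
    (hμ : Integrable (fun y => min 1 (hastingsRatio q pμ x y) * q x y) lam)
    (hν : Integrable (fun y => min 1 (hastingsRatio q pν x y) * q x y) lam) :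
    mhKernelFun lam q pμ x f - mhKernelFun lam q pν x f
      = ∫ y, (f y - f x) *
          ((min 1 (hastingsRatio q pμ x y) - min 1 (hastingsRatio q pν x y)) * q x y) ∂lam := by
  have hsplit : ∫ y, (f y - f x) *
      ((min 1 (hastingsRatio q pμ x y) - min 1 (hastingsRatio q pν x y)) * q x y) ∂lam
      = ((∫ y, f y * min 1 (hastingsRatio q pμ x y) * q x y ∂lam)
          - ∫ y, f y * min 1 (hastingsRatio q pν x y) * q x y ∂lam)
        - f x * ((∫ y, min 1 (hastingsRatio q pμ x y) * q x y ∂lam)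
          - ∫ y, min 1 (hastingsRatio q pν x y) * q x y ∂lam) := by
    rw [← integral_sub hfμ hfν, ← integral_sub hμ hν, ← integral_const_mul,
      ← integral_sub (by exact hfμ.sub hfν) (by exact (hμ.sub hν).const_mul (f x))]
    congr 1 with y
    ring
  rw [hsplit, mhKernelFun, mhKernelFun]
  ring

theorem integral_withDensity_ofReal {p : X → ℝ} (hpm : Measurable p) (hp : ∀ z, 0 ≤ p z)
    (g : X → ℝ) :
    ∫ z, g z ∂(lam.withDensity fun z => ENNReal.ofReal (p z)) = ∫ z, p z * g z ∂lam := by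
  rw [integral_withDensity_eq_integral_toReal_smul hpm.ennreal_ofReal
    (ae_of_all _ fun _ => ofReal_lt_top)]
  simp only [ENNReal.toReal_ofReal (hp _), smul_eq_mul]

theorem integrable_mul_abs_sub {V pμ pν : X → ℝ} (hV : ∀ z, 0 ≤ V z)
    (hVμ : Integrable (fun z => V z * pμ z) lam) (hVν : Integrable (fun z => V z * pν z) lam) :
    Integrable (fun z => V z * |pν z - pμ z|) lam :=
  (hVν.sub hVμ).abs.congr (ae_of_all _ fun z => by
    simp only [Pi.sub_apply, ← mul_sub, abs_mul, abs_of_nonneg (hV z)])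

theorem lintegral_mul_abs_sub_le_vDistE {V pμ pν : X → ℝ} (hVm : Measurable V)
    (hV : ∀ z, 0 ≤ V z) (hpμm : Measurable pμ) (hpνm : Measurable pν) (hpμ : ∀ z, 0 ≤ pμ z)
    (hpν : ∀ z, 0 ≤ pν z) (hVμ : Integrable (fun z => V z * pμ z) lam)
    (hVν : Integrable (fun z => V z * pν z) lam) :
    ∫⁻ z, ENNReal.ofReal (V z * |pν z - pμ z|) ∂lam
      ≤ vDistE V (lam.withDensity fun z => ENNReal.ofReal (pμ z))
          (lam.withDensity fun z => ENNReal.ofReal (pν z)) := by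
  set f₀ : X → ℝ := fun z => if pν z ≤ pμ z then V z else -V z
  have hf₀m : Measurable f₀ := Measurable.ite (measurableSet_le hpνm hpμm) hVm hVm.neg
  have hf₀V : ∀ z, |f₀ z| ≤ V z := fun z => by
    unfold f₀; split_ifs <;> simp [abs_of_nonneg (hV z)]
  have hint : ∀ p : X → ℝ, Measurable p → (∀ z, 0 ≤ p z) → Integrable (fun z => V z * p z) lam →
      Integrable (fun z => p z * f₀ z) lam := fun p hpm hp hVp =>
    hVp.mono' (hpm.mul hf₀m).aestronglyMeasurable (ae_of_all _ fun z => by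
      rw [norm_mul, Real.norm_of_nonneg (hp z), mul_comm (V z)]
      exact mul_le_mul_of_nonneg_left (hf₀V z) (hp z))
  have hdiff : ∀ z, pμ z * f₀ z - pν z * f₀ z = V z * |pν z - pμ z| := fun z => by
    unfold f₀; split_ifs with h
    · rw [abs_of_nonpos (sub_nonpos.2 h)]; ring
    · rw [abs_of_pos (sub_pos.2 (not_le.1 h))]; ring
  have hVΔ := integrable_mul_abs_sub hV hVμ hVν
  calc ∫⁻ z, ENNReal.ofReal (V z * |pν z - pμ z|) ∂lam
      = ENNReal.ofReal (∫ z, V z * |pν z - pμ z| ∂lam) :=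
        (ofReal_integral_eq_lintegral_ofReal hVΔ
          (ae_of_all _ fun z => mul_nonneg (hV z) (abs_nonneg _))).symm
    _ = ENNReal.ofReal |(∫ z, f₀ z ∂(lam.withDensity fun z => ENNReal.ofReal (pμ z)))
          - ∫ z, f₀ z ∂(lam.withDensity fun z => ENNReal.ofReal (pν z))| := by
        rw [integral_withDensity_ofReal hpμm hpμ, integral_withDensity_ofReal hpνm hpν,
          ← integral_sub (hint pμ hpμm hpμ hVμ) (hint pν hpνm hpν hVν), integral_congr_ae
          (ae_of_all _ hdiff), abs_of_nonneg (integral_nonneg fun z =>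
            mul_nonneg (hV z) (abs_nonneg _))]
    _ ≤ _ := le_iSup (fun g : {g : X → ℝ // Measurable g ∧ ∀ z, |g z| ≤ V z} =>
          ENNReal.ofReal |(∫ z, g.1 z ∂(lam.withDensity fun z => ENNReal.ofReal (pμ z)))
            - ∫ z, g.1 z ∂(lam.withDensity fun z => ENNReal.ofReal (pν z))|) ⟨f₀, hf₀m, hf₀V⟩

theorem lintegral_mul_le_iSup_mul {u g : X → ℝ≥0∞} (hg : Measurable g) :
    ∫⁻ y, u y * g y ∂lam ≤ (⨆ y, u y) * ∫⁻ y, g y ∂lam :=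
  (lintegral_mono fun y => mul_le_mul_left (le_iSup u y) (g y)).trans_eq
    (lintegral_const_mul _ hg)

theorem lintegral_lintegral_mul_add_mul_le [SFinite lam] {Y : Type*} [MeasurableSpace Y]
    {ν : Measure Y} [SFinite ν] {W₁ W₂ : X × Y → ℝ≥0∞} {g : X → ℝ≥0∞}
    (hW₁ : Measurable W₁) (hW₂ : Measurable W₂) (hg : Measurable g)
    (hg_fin : ∫⁻ y, g y ∂lam ≠ ∞) {d : ℝ≥0∞} (hd : d ≠ ∞) :
    ∫⁻ y, ∫⁻ t, (W₁ (y, t) * g y + W₂ (y, t) * d) ∂ν ∂lam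
      ≤ (∫⁻ t, ⨆ y, W₁ (y, t) ∂ν) * ∫⁻ y, g y ∂lam + (∫⁻ t, ∫⁻ y, W₂ (y, t) ∂lam ∂ν) * d := by
  rw [lintegral_lintegral_swap ((hW₁.mul (hg.comp measurable_fst)).add
    (hW₂.mul_const _)).aemeasurable]
  calc ∫⁻ t, ∫⁻ y, (W₁ (y, t) * g y + W₂ (y, t) * d) ∂lam ∂ν
      ≤ ∫⁻ t, ((⨆ y, W₁ (y, t)) * ∫⁻ y, g y ∂lam + (∫⁻ y, W₂ (y, t) ∂lam) * d) ∂ν :=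
        lintegral_mono fun t => by
          rw [lintegral_add_right _ (by exact (hW₂.comp measurable_prodMk_right).mul_const d),
            lintegral_mul_const' _ _ hd]
          gcongr
          exact lintegral_mul_le_iSup_mul hg
    _ = _ := by
        rw [lintegral_add_right _ (hW₂.lintegral_prod_left'.mul_const _),
          lintegral_mul_const' _ _ hg_fin, lintegral_mul_const' _ _ hd]

end MetropolisHastings

theorem stmt_11_general {X : Type*} [MeasurableSpace X]
    (lam : Measure X) [SigmaFinite lam]
    (V : X → ℝ) (hVm : Measurable V) (hV1 : ∀ x, 1 ≤ V x)
    (q : X → X → ℝ) (hqm : Measurable (Function.uncurry q))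
    (hqpos : ∀ x y, 0 < q x y) (hqb : ∃ c, ∀ x y, q x y ≤ c)
    (pμ pν : X → ℝ) (hpμm : Measurable pμ) (hpνm : Measurable pν)
    (hpμpos : ∀ x, 0 < pμ x) (hpνpos : ∀ x, 0 < pν x)
    (hVμ : Integrable (fun x => V x * pμ x) lam)
    (hVν : Integrable (fun x => V x * pν x) lam)
    (x : X) :
    ∀ f : X → ℝ, Measurable f → (∀ y, |f y| ≤ V y) →
      ENNReal.ofReal |mhKernelFun lam q pμ x f - mhKernelFun lam q pν x f|
        ≤ (∫⁻ t in Set.Icc (0 : ℝ) 1,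
              ⨆ y, ENNReal.ofReal
                ((V y + V x) * q y x / (((1 - t) * pμ x + t * pν x) * V y)))
            * vDistE V (lam.withDensity fun z => ENNReal.ofReal (pμ z))
                (lam.withDensity fun z => ENNReal.ofReal (pν z))
          + (∫⁻ t in Set.Icc (0 : ℝ) 1,
                ∫⁻ z, ENNReal.ofReal
                  ((V x + V z) *
                    (((1 - t) * pμ z + t * pν z) / ((1 - t) * pμ x + t * pν x) ^ 2) *
                      q z x *
                        (if ((1 - t) * pμ z + t * pν z) * q z x ≤
                            ((1 - t) * pμ x + t * pν x) * q x z then 1 else 0))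
                ∂lam)
              * ENNReal.ofReal |pμ x - pν x| := by
  intro f hfm hfV
  obtain ⟨c, hqc⟩ := hqb
  have hV : ∀ z, 0 < V z := fun z => one_pos.trans_le (hV1 z)
  have hint {p g : X → ℝ} (hpm : Measurable p) (hp : ∀ z, 0 < p z)
      (hVp : Integrable (fun y => V y * p y) lam) (hgm : Measurable g) (hgV : ∀ y, |g y| ≤ V y) :=
    integrable_mul_min_one_hastingsRatio_mul (x := x) hqm hqpos (fun y => hqc y x) hpm hp hVp
      hgm hgV
  -- the constant `1` is an admissible test function because `V ≥ 1`
  have hone : ∀ y, |(1 : ℝ)| ≤ V y := by simpa using hV1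
  rw [mhKernelFun_sub_mhKernelFun (hint hpμm hpμpos hVμ hfm hfV) (hint hpνm hpνpos hVν hfm hfV)
    (by simpa using hint hpμm hpμpos hVμ measurable_const hone)
    (by simpa using hint hpνm hpνpos hVν measurable_const hone),
    ← Real.enorm_eq_ofReal_abs]
  have hq₁ : Measurable fun y => q y x := hqm.comp (measurable_id.prodMk measurable_const)
  have hq₂ : Measurable fun y => q x y := hqm.comp measurable_prodMk_left
  refine (enorm_integral_le_lintegral_enorm _).trans <|
    (lintegral_mono fun y => enorm_mh_integrand_le hV hfV hqpos hpμpos hpνpos y).trans <|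
    (lintegral_lintegral_mul_add_mul_le
      (W₁ := fun p => ENNReal.ofReal
        ((V p.1 + V x) * q p.1 x / (((1 - p.2) * pμ x + p.2 * pν x) * V p.1)))
      (W₂ := fun p => ENNReal.ofReal ((V x + V p.1) *
        (((1 - p.2) * pμ p.1 + p.2 * pν p.1) / ((1 - p.2) * pμ x + p.2 * pν x) ^ 2) * q p.1 x *
          (if ((1 - p.2) * pμ p.1 + p.2 * pν p.1) * q p.1 x ≤
            ((1 - p.2) * pμ x + p.2 * pν x) * q x p.1 then 1 else 0)))
      (by fun_prop)
      (Measurable.ennreal_ofReal (Measurable.mul (by fun_prop) (Measurable.ite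
        (measurableSet_le (by fun_prop) (by fun_prop)) measurable_const measurable_const)))
      (by fun_prop) (integrable_mul_abs_sub (fun z => (hV z).le) hVμ hVν).lintegral_lt_top.ne
      ofReal_ne_top).trans ?_
  gcongr
  exact lintegral_mul_abs_sub_le_vDistE hVm (fun z => (hV z).le) hpμm hpνm
    (fun z => (hpμpos z).le) (fun z => (hpνpos z).le) hVμ hVν

/-- **Lipschitz (mean value) inequality for Metropolis–Hastings kernels
(point-mass case):** for every measurable `f` with `‖f‖_V ≤ 1`,
`|P_μ(x,f) - P_ν(x,f)| ≤ M_x ‖μ - ν‖_V + M⊥_x |pμ(x) - pν(x)|`, where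
`M_x = ∫_0^1 sup_y [(V(y)+V(x)) q(y,x) / (p_t(x) V(y))] dt` and
`M⊥_x = ∫_0^1 ∫ (V(x)+V(z)) (p_t(z)/p_t(x)²) q(z,x) 1{p_t(z)q(z,x) ≤ p_t(x)q(x,z)} λ(dz) dt`,
with `p_t = (1-t) pμ + t pν`. -/
theorem stmt_11 {X : Type*} [MeasurableSpace X]
    (lam : Measure X) [SigmaFinite lam]
    (V : X → ℝ) (hVm : Measurable V) (hV1 : ∀ x, 1 ≤ V x)
    (q : X → X → ℝ) (hqm : Measurable (Function.uncurry q))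
    (hqpos : ∀ x y, 0 < q x y) (hqb : ∃ c, ∀ x y, q x y ≤ c)
    (hqint : ∀ x, ∫ y, q x y ∂lam = 1)
    (pμ pν : X → ℝ) (hpμm : Measurable pμ) (hpνm : Measurable pν)
    (hpμpos : ∀ x, 0 < pμ x) (hpνpos : ∀ x, 0 < pν x)
    (hpμb : ∃ c, ∀ x, pμ x ≤ c) (hpνb : ∃ c, ∀ x, pν x ≤ c)
    (hμprob : IsProbabilityMeasure (lam.withDensity fun x => ENNReal.ofReal (pμ x)))
    (hνprob : IsProbabilityMeasure (lam.withDensity fun x => ENNReal.ofReal (pν x)))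
    (hVμ : Integrable (fun x => V x * pμ x) lam)
    (hVν : Integrable (fun x => V x * pν x) lam)
    (x : X) :
    ∀ f : X → ℝ, Measurable f → (∀ y, |f y| ≤ V y) →
      ENNReal.ofReal |mhKernelFun lam q pμ x f - mhKernelFun lam q pν x f|
        ≤ (∫⁻ t in Set.Icc (0 : ℝ) 1,
              ⨆ y, ENNReal.ofReal
                ((V y + V x) * q y x / (((1 - t) * pμ x + t * pν x) * V y)))
            * vDistE V (lam.withDensity fun z => ENNReal.ofReal (pμ z))
                (lam.withDensity fun z => ENNReal.ofReal (pν z))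
          + (∫⁻ t in Set.Icc (0 : ℝ) 1,
                ∫⁻ z, ENNReal.ofReal
                  ((V x + V z) *
                    (((1 - t) * pμ z + t * pν z) / ((1 - t) * pμ x + t * pν x) ^ 2) *
                      q z x *
                        (if ((1 - t) * pμ z + t * pν z) * q z x ≤
                            ((1 - t) * pμ x + t * pν x) * q x z then 1 else 0))
                ∂lam)
              * ENNReal.ofReal |pμ x - pν x| :=
  stmt_11_general lam V hVm hV1 q hqm hqpos hqb pμ pν hpμm hpνm hpμpos hpνpos hVμ hVν x
end

section
/- Let V : X -> [1,infinity) be measurable, and let P and Q be Markov kernels on a measurable space X with invariant probability measures mu and nu respectively, such that P is V-geometrically ergodic with constants (C_P,beta_P) and Q is V-geometrically ergodic with constants (C_Q,beta_Q). For g measurable with ||g||_V < infinity define the Poisson resolvents R_P g(x) := sum over k >= 0 of (P^k g(x) - mu(g)) and R_Q g(x) := sum over k >= 0 of (Q^k g(x) - nu(g)). Then for every measurable f with ||f||_V < infinity and every x in X: R_Q f(x) - R_P f(x) = R_P(h)(x) + ∫ R_Q f dmu, where h(y) := ∫ R_Q f(z) Q(y,dz) - ∫ R_Q f(z) P(y,dz).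 -/
/-! Write `g = R_Q f`. Exchanging sum and integral, which the geometric bound justifies, gives
the Poisson equation `∫ g dQ(y,·) = g(y) - f(y) + ν(f)`, so `h = (g - P g) - f + ν(f)`. On
functions of finite `V`-norm the resolvent `R_P` is additive and ignores additive constants, and
`R_P (g - P g)(x) = g(x) - μ(g)` is a telescoping sum, since `P^k g(x) → μ(g)` and
`μ(P g) = μ(g)` by invariance. Hence `R_P h(x) = g(x) - μ(g) - R_P f(x)`. -/

open MeasureTheory ProbabilityTheory

/-- The action `P^k f (x) = ∫ f dP^k(x,·)` of the `k`-fold iterate of a kernel on a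
function. -/
noncomputable def kernelFunIter {X : Type*} [MeasurableSpace X] (P : Kernel X X) :
    ℕ → (X → ℝ) → X → ℝ
  | 0, f => f
  | n + 1, f => fun x => ∫ y, kernelFunIter P n f y ∂(P x)

/-- The Poisson resolvent `R f(x) = ∑_{k ≥ 0} (P^k f(x) - μ(f))`. -/
noncomputable def resolventFun {X : Type*} [MeasurableSpace X] (P : Kernel X X)
    (μ : Measure X) (f : X → ℝ) (x : X) : ℝ :=
  ∑' k : ℕ, (kernelFunIter P k f x - ∫ y, f y ∂μ)

open Filter Topology

section

variable {X : Type*} [MeasurableSpace X]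

section kernelFunIter

variable {K : Kernel X X} {f : X → ℝ}

lemma measurable_kernelFunIter (hf : Measurable f) (k : ℕ) :
    Measurable (kernelFunIter K k f) := by
  induction k with
  | zero => exact hf
  | succ k ih => exact ih.stronglyMeasurable.integral_kernel.measurable

lemma kernelFunIter_const_mul (c : ℝ) (f : X → ℝ) (k : ℕ) :
    kernelFunIter K k (fun y => c * f y) = fun x => c * kernelFunIter K k f x := by
  induction k with
  | zero => rfl
  | succ k ih => funext x; simp only [kernelFunIter, ih, integral_const_mul]

lemma kernelFunIter_kernelFunIter_one (f : X → ℝ) (k : ℕ) :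
    kernelFunIter K k (kernelFunIter K 1 f) = kernelFunIter K (k + 1) f := by
  induction k with
  | zero => rfl
  | succ k ih => simp only [kernelFunIter] at ih ⊢; rw [ih]

end kernelFunIter

lemma integrable_of_forall_integral_min_le {m : Measure X} [IsFiniteMeasure m] {g : X → ℝ}
    (hg : Measurable g) (hg0 : ∀ x, 0 ≤ g x) {B : ℝ}
    (hB : ∀ n : ℕ, ∫ x, min (g x) n ∂m ≤ B) : Integrable g m := by
  have hmin0 (n : ℕ) (x : X) : 0 ≤ min (g x) n := le_min (hg0 x) n.cast_nonneg
  have hmin_int (n : ℕ) : Integrable (fun x => min (g x) n) m :=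
    (integrable_const (n : ℝ)).mono' (hg.min measurable_const).aestronglyMeasurable
      (Eventually.of_forall fun x => by
        rw [Real.norm_of_nonneg (hmin0 n x)]; exact min_le_right _ _)
  have hlim : Tendsto (fun n : ℕ => ∫⁻ x, ENNReal.ofReal (min (g x) n) ∂m) atTop
      (𝓝 (∫⁻ x, ENNReal.ofReal (g x) ∂m)) := by
    refine lintegral_tendsto_of_tendsto_of_monotone
      (fun n => (hg.min measurable_const).ennreal_ofReal.aemeasurable)
      (Eventually.of_forall fun x i j hij => ENNReal.ofReal_le_ofReal
        (min_le_min le_rfl (Nat.cast_le.2 hij)))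
      (Eventually.of_forall fun x => tendsto_atTop_of_eventually_const (i₀ := ⌈g x⌉₊)
        fun n hn => congrArg ENNReal.ofReal
          (min_eq_left ((Nat.le_ceil _).trans (by exact_mod_cast hn))))
  refine ⟨hg.aestronglyMeasurable,
    (hasFiniteIntegral_iff_ofReal (Eventually.of_forall hg0)).2 ?_⟩
  refine (le_of_tendsto' hlim fun n => ?_).trans_lt (ENNReal.ofReal_lt_top (r := B))
  rw [← ofReal_integral_eq_lintegral_ofReal (hmin_int n) (Eventually.of_forall (hmin0 n))]
  exact ENNReal.ofReal_le_ofReal (hB n)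

lemma ProbabilityTheory.Kernel.Invariant.integral_integral {K : Kernel X X} [IsSFiniteKernel K]
    {m : Measure X} [SFinite m] (hinv : K.Invariant m) {f : X → ℝ} (hf : Integrable f m) :
    ∫ x, ∫ y, f y ∂K x ∂m = ∫ y, f y ∂m := by
  rw [← hinv.def] at hf
  conv_rhs => rw [← hinv.def]
  rw [Measure.comp_eq_comp_const_apply] at hf ⊢
  rw [Kernel.integral_comp hf, Kernel.const_apply]

def IsVBounded (V f : X → ℝ) : Prop :=
  Measurable f ∧ ∃ c, ∀ x, |f x| ≤ c * V x

namespace IsVBounded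

variable {V f g : X → ℝ}

lemma exists_pos (hV : ∀ x, 0 ≤ V x) (hf : IsVBounded V f) :
    ∃ c > 0, ∀ x, |f x| ≤ c * V x := by
  obtain ⟨c, hc⟩ := hf.2
  exact ⟨max c 1, by positivity, fun x =>
    (hc x).trans (mul_le_mul_of_nonneg_right (le_max_left c 1) (hV x))⟩

lemma of_abs_sub_le (hV1 : ∀ x, 1 ≤ V x) (hf : Measurable f) {a c : ℝ}
    (h : ∀ x, |f x - a| ≤ c * V x) : IsVBounded V f := by
  refine ⟨hf, c + |a|, fun x => ?_⟩
  calc |f x| ≤ |f x - a| + |a| := by simpa using abs_add_le (f x - a) a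
    _ ≤ c * V x + |a| * V x :=
        add_le_add (h x) (le_mul_of_one_le_right (abs_nonneg a) (hV1 x))
    _ = (c + |a|) * V x := by ring

lemma sub (hf : IsVBounded V f) (hg : IsVBounded V g) : IsVBounded V (fun x => f x - g x) := by
  obtain ⟨c, hc⟩ := hf.2
  obtain ⟨d, hd⟩ := hg.2
  refine ⟨hf.1.sub hg.1, c + d, fun x => ?_⟩
  calc |f x - g x| ≤ |f x| + |g x| := abs_sub _ _
    _ ≤ c * V x + d * V x := add_le_add (hc x) (hd x)
    _ = (c + d) * V x := by ring

lemma integrable {m : Measure X} (hf : IsVBounded V f) (hV : Integrable V m) : Integrable f m := by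
  obtain ⟨c, hc⟩ := hf.2
  exact (hV.const_mul c).mono' hf.1.aestronglyMeasurable (Eventually.of_forall hc)

end IsVBounded

structure IsVGeomErgodic (V : X → ℝ) (K : Kernel X X) (m : Measure X) (C β : ℝ) : Prop where
  measurable : Measurable V
  one_le : ∀ x, 1 ≤ V x
  rate_mem : β ∈ Set.Ioo 0 1
  abs_iter_sub_le : ∀ (k : ℕ) (x : X) (f : X → ℝ), Measurable f →
    (∀ y, |f y| ≤ V y) → |kernelFunIter K k f x - ∫ y, f y ∂m| ≤ C * β ^ k * V x

namespace IsVGeomErgodic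

variable {V : X → ℝ} {K : Kernel X X} {m : Measure X} {C β : ℝ} {f g : X → ℝ}

lemma nonneg (herg : IsVGeomErgodic V K m C β) (x : X) : 0 ≤ V x :=
  zero_le_one.trans (herg.one_le x)

lemma abs_iter_sub_le_mul (herg : IsVGeomErgodic V K m C β) (hf : Measurable f) {c : ℝ}
    (hc : 0 < c) (hfc : ∀ y, |f y| ≤ c * V y) (k : ℕ) (x : X) :
    |kernelFunIter K k f x - ∫ y, f y ∂m| ≤ c * (C * β ^ k * V x) := by
  have h := herg.abs_iter_sub_le k x (fun y => c⁻¹ * f y) (measurable_const.mul hf)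
    fun y => by rw [abs_mul, abs_of_pos (inv_pos.2 hc), inv_mul_le_iff₀ hc]; exact hfc y
  rwa [kernelFunIter_const_mul, integral_const_mul, ← mul_sub, abs_mul,
    abs_of_pos (inv_pos.2 hc), inv_mul_le_iff₀ hc] at h

lemma exists_abs_iter_sub_le (herg : IsVGeomErgodic V K m C β) (hf : IsVBounded V f) :
    ∃ c, ∀ k x, |kernelFunIter K k f x - ∫ y, f y ∂m| ≤ c * β ^ k * V x := by
  obtain ⟨c, hc, hfc⟩ := hf.exists_pos herg.nonneg
  exact ⟨c * C, fun k x => (herg.abs_iter_sub_le_mul hf.1 hc hfc k x).trans_eq (by ring)⟩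

lemma integral_le (herg : IsVGeomErgodic V K m C β) (hf : Measurable f)
    (hfV : ∀ y, |f y| ≤ V y) (x : X) : ∫ y, f y ∂m ≤ (1 + C) * V x := by
  have h := herg.abs_iter_sub_le 0 x f hf hfV
  simp only [kernelFunIter, pow_zero, mul_one] at h
  linarith [(abs_le.1 h).1, (le_abs_self (f x)).trans (hfV x)]

lemma integral_kernel_le (herg : IsVGeomErgodic V K m C β) (hf : Measurable f)
    (hfV : ∀ y, |f y| ≤ V y) (x : X) : ∫ y, f y ∂K x ≤ (1 + C + C * β) * V x := by
  have h := herg.abs_iter_sub_le 1 x f hf hfV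
  simp only [kernelFunIter, pow_one] at h
  linarith [(abs_le.1 h).2, herg.integral_le hf hfV x]

lemma integrable_of_forall_integral_le {m' : Measure X} [IsFiniteMeasure m']
    (herg : IsVGeomErgodic V K m C β) {B : ℝ}
    (hB : ∀ u : X → ℝ, Measurable u → (∀ y, |u y| ≤ V y) → ∫ y, u y ∂m' ≤ B) :
    Integrable V m' :=
  integrable_of_forall_integral_min_le herg.measurable herg.nonneg fun n =>
    hB _ (herg.measurable.min measurable_const) fun y => by
      rw [abs_of_nonneg (le_min (herg.nonneg y) n.cast_nonneg)]; exact min_le_left _ _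

lemma integrable [IsProbabilityMeasure m] (herg : IsVGeomErgodic V K m C β) : Integrable V m :=
  have ⟨x⟩ := nonempty_of_isProbabilityMeasure m
  herg.integrable_of_forall_integral_le fun _ hu huV => herg.integral_le hu huV x

lemma integrable_kernel [IsMarkovKernel K] (herg : IsVGeomErgodic V K m C β) (x : X) :
    Integrable V (K x) :=
  herg.integrable_of_forall_integral_le fun _ hu huV => herg.integral_kernel_le hu huV x

lemma isVBounded_iter (herg : IsVGeomErgodic V K m C β) (hf : IsVBounded V f) (k : ℕ) :
    IsVBounded V (kernelFunIter K k f) :=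
  have ⟨_, hc⟩ := herg.exists_abs_iter_sub_le hf
  .of_abs_sub_le herg.one_le (measurable_kernelFunIter hf.1 k) (hc k)

lemma summable_iter_sub (herg : IsVGeomErgodic V K m C β) (hf : IsVBounded V f) (x : X) :
    Summable fun k => kernelFunIter K k f x - ∫ y, f y ∂m :=
  have ⟨c, hc⟩ := herg.exists_abs_iter_sub_le hf
  .of_norm_bounded ((summable_geometric_of_lt_one herg.rate_mem.1.le herg.rate_mem.2).mul_left
    (c * V x)) fun k => (hc k x).trans_eq (by ring)

lemma isVBounded_resolventFun (herg : IsVGeomErgodic V K m C β) (hf : IsVBounded V f) :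
    IsVBounded V (resolventFun K m f) := by
  obtain ⟨c, hc⟩ := herg.exists_abs_iter_sub_le hf
  refine ⟨measurable_of_tendsto_metrizable (fun n => Finset.measurable_sum (Finset.range n)
      fun k _ => (measurable_kernelFunIter hf.1 k).sub measurable_const)
    (tendsto_pi_nhds.2 fun x => (herg.summable_iter_sub hf x).hasSum.tendsto_sum_nat),
    c * (1 - β)⁻¹, fun x => ?_⟩
  have hgeom := (hasSum_geometric_of_lt_one herg.rate_mem.1.le herg.rate_mem.2).mul_left (c * V x)
  calc |resolventFun K m f x| ≤ c * V x * (1 - β)⁻¹ :=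
        tsum_of_norm_bounded (f := fun k => kernelFunIter K k f x - ∫ y, f y ∂m) hgeom
          fun k => (hc k x).trans_eq (by ring)
    _ = c * (1 - β)⁻¹ * V x := by ring

lemma kernelFunIter_sub [IsMarkovKernel K] (herg : IsVGeomErgodic V K m C β)
    (hf : IsVBounded V f) (hg : IsVBounded V g) (k : ℕ) :
    kernelFunIter K k (fun y => f y - g y)
      = fun x => kernelFunIter K k f x - kernelFunIter K k g x := by
  induction k with
  | zero => rfl
  | succ k ih =>
    funext x
    simp only [kernelFunIter, ih]
    exact integral_sub ((herg.isVBounded_iter hf k).integrable (herg.integrable_kernel x))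
      ((herg.isVBounded_iter hg k).integrable (herg.integrable_kernel x))

lemma kernelFunIter_add_const [IsMarkovKernel K] (herg : IsVGeomErgodic V K m C β)
    (hf : IsVBounded V f) (a : ℝ) (k : ℕ) :
    kernelFunIter K k (fun y => f y + a) = fun x => kernelFunIter K k f x + a := by
  induction k with
  | zero => rfl
  | succ k ih =>
    funext x
    simp only [kernelFunIter, ih]
    rw [integral_add ((herg.isVBounded_iter hf k).integrable (herg.integrable_kernel x))
      (integrable_const a), integral_const, probReal_univ, one_smul]

lemma resolventFun_sub [IsMarkovKernel K] [IsProbabilityMeasure m]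
    (herg : IsVGeomErgodic V K m C β) (hf : IsVBounded V f) (hg : IsVBounded V g) (x : X) :
    resolventFun K m (fun y => f y - g y) x = resolventFun K m f x - resolventFun K m g x := by
  simp only [resolventFun, herg.kernelFunIter_sub hf hg,
    integral_sub (hf.integrable herg.integrable) (hg.integrable herg.integrable)]
  rw [← (herg.summable_iter_sub hf x).tsum_sub (herg.summable_iter_sub hg x)]
  exact tsum_congr fun k => by ring

lemma resolventFun_add_const [IsMarkovKernel K] [IsProbabilityMeasure m]
    (herg : IsVGeomErgodic V K m C β) (hf : IsVBounded V f) (a : ℝ) (x : X) :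
    resolventFun K m (fun y => f y + a) x = resolventFun K m f x := by
  simp only [resolventFun, herg.kernelFunIter_add_const hf,
    integral_add (hf.integrable herg.integrable) (integrable_const a), integral_const,
    probReal_univ, one_smul, add_sub_add_right_eq_sub]

lemma resolventFun_sub_kernel [IsMarkovKernel K] [IsProbabilityMeasure m]
    (herg : IsVGeomErgodic V K m C β) (hinv : K.Invariant m) (hf : IsVBounded V f) (x : X) :
    resolventFun K m (fun y => f y - ∫ z, f z ∂K y) x = f x - ∫ y, f y ∂m := by
  have hshift : resolventFun K m (kernelFunIter K 1 f) x
      = ∑' k, (kernelFunIter K (k + 1) f x - ∫ y, f y ∂m) := by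
    simp only [resolventFun, kernelFunIter_kernelFunIter_one]
    rw [show ∫ y, kernelFunIter K 1 f y ∂m = ∫ y, f y ∂m from
        hinv.integral_integral (hf.integrable herg.integrable)]
  have hsplit := (herg.summable_iter_sub hf x).tsum_eq_zero_add
  calc resolventFun K m (fun y => f y - ∫ z, f z ∂K y) x
      = resolventFun K m f x - resolventFun K m (kernelFunIter K 1 f) x :=
        herg.resolventFun_sub hf (herg.isVBounded_iter hf 1) x
    _ = f x - ∫ y, f y ∂m := by
        rw [hshift, resolventFun, hsplit]
        simp only [kernelFunIter]
        ring

lemma integral_resolventFun [IsMarkovKernel K] (herg : IsVGeomErgodic V K m C β)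
    (hf : IsVBounded V f) (x : X) :
    ∫ y, resolventFun K m f y ∂K x = resolventFun K m f x - f x + ∫ y, f y ∂m := by
  obtain ⟨c, hc⟩ := herg.exists_abs_iter_sub_le hf
  have hint (k : ℕ) : Integrable (kernelFunIter K k f) (K x) :=
    (herg.isVBounded_iter hf k).integrable (herg.integrable_kernel x)
  have hsum : Summable fun k => ∫ y, ‖kernelFunIter K k f y - ∫ z, f z ∂m‖ ∂K x := by
    refine .of_nonneg_of_le (fun k => integral_nonneg fun y => norm_nonneg _) (fun k => ?_)
      (((summable_geometric_of_lt_one herg.rate_mem.1.le herg.rate_mem.2).mul_left c).mul_right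
        (∫ y, V y ∂K x))
    rw [← integral_const_mul]
    exact integral_mono ((hint k).sub (integrable_const _)).norm
      ((herg.integrable_kernel x).const_mul _) (hc k)
  have hstep (k : ℕ) : ∫ y, (kernelFunIter K k f y - ∫ z, f z ∂m) ∂K x
      = kernelFunIter K (k + 1) f x - ∫ z, f z ∂m := by
    rw [integral_sub (hint k) (integrable_const _), integral_const, probReal_univ, one_smul]
    rfl
  calc ∫ y, resolventFun K m f y ∂K x
      = ∑' k, ∫ y, (kernelFunIter K k f y - ∫ z, f z ∂m) ∂K x :=
        (integral_tsum_of_summable_integral_norm (fun k => (hint k).sub (integrable_const _))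
          hsum).symm
    _ = ∑' k, (kernelFunIter K (k + 1) f x - ∫ z, f z ∂m) := tsum_congr hstep
    _ = resolventFun K m f x - f x + ∫ y, f y ∂m := by
        rw [resolventFun, (herg.summable_iter_sub hf x).tsum_eq_zero_add]
        simp only [kernelFunIter]
        ring

end IsVGeomErgodic

end

theorem stmt_14_general {X : Type*} [MeasurableSpace X]
    (V : X → ℝ) (hVm : Measurable V) (hV1 : ∀ x, 1 ≤ V x)
    (P Q : Kernel X X) [IsMarkovKernel P] [IsMarkovKernel Q]
    (μ ν : Measure X) [IsProbabilityMeasure μ]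
    (hinvP : μ.bind (fun x => P x) = μ)
    (CP βP CQ βQ : ℝ) (hβP : βP ∈ Set.Ioo (0 : ℝ) 1) (hβQ : βQ ∈ Set.Ioo (0 : ℝ) 1)
    (hergP : ∀ (k : ℕ) (x : X) (f : X → ℝ), Measurable f → (∀ y, |f y| ≤ V y) →
      |kernelFunIter P k f x - ∫ y, f y ∂μ| ≤ CP * βP ^ k * V x)
    (hergQ : ∀ (k : ℕ) (x : X) (f : X → ℝ), Measurable f → (∀ y, |f y| ≤ V y) →
      |kernelFunIter Q k f x - ∫ y, f y ∂ν| ≤ CQ * βQ ^ k * V x)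
    (f : X → ℝ) (hfm : Measurable f) (hfV : ∃ c, ∀ x, |f x| ≤ c * V x) (x : X) :
    resolventFun Q ν f x - resolventFun P μ f x
      = resolventFun P μ
          (fun y => (∫ z, resolventFun Q ν f z ∂(Q y)) - ∫ z, resolventFun Q ν f z ∂(P y))
          x
        + ∫ y, resolventFun Q ν f y ∂μ := by
  have hP : IsVGeomErgodic V P μ CP βP := ⟨hVm, hV1, hβP, hergP⟩
  have hQ : IsVGeomErgodic V Q ν CQ βQ := ⟨hVm, hV1, hβQ, hergQ⟩
  have hf : IsVBounded V f := ⟨hfm, hfV⟩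
  have hg := hQ.isVBounded_resolventFun hf
  have hgPg : IsVBounded V fun y => resolventFun Q ν f y - ∫ z, resolventFun Q ν f z ∂(P y) :=
    hg.sub (hP.isVBounded_iter hg 1)
  have hpoisson :
      (fun y => (∫ z, resolventFun Q ν f z ∂(Q y)) - ∫ z, resolventFun Q ν f z ∂(P y))
      = fun y => ((resolventFun Q ν f y - ∫ z, resolventFun Q ν f z ∂(P y)) - f y)
          + ∫ z, f z ∂ν := by
    funext y
    rw [hQ.integral_resolventFun hf y]
    ring
  rw [hpoisson, hP.resolventFun_add_const (hgPg.sub hf), hP.resolventFun_sub hgPg hf,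
    hP.resolventFun_sub_kernel hinvP hg]
  ring

/-- **Resolvent identity.**  Let `P, Q` be `V`-geometrically ergodic Markov kernels with
invariant probability measures `μ, ν` and resolvents `R_P, R_Q`.  Then for every
measurable `f` with `‖f‖_V < ∞` and every `x`:
`R_Q f(x) - R_P f(x) = R_P(h)(x) + ∫ R_Q f dμ`, where
`h(y) := ∫ R_Q f dQ(y,·) - ∫ R_Q f dP(y,·)`. -/
theorem stmt_14 {X : Type*} [MeasurableSpace X]
    (V : X → ℝ) (hVm : Measurable V) (hV1 : ∀ x, 1 ≤ V x)
    (P Q : Kernel X X) [IsMarkovKernel P] [IsMarkovKernel Q]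
    (μ ν : Measure X) [IsProbabilityMeasure μ] [IsProbabilityMeasure ν]
    (hinvP : μ.bind (fun x => P x) = μ) (hinvQ : ν.bind (fun x => Q x) = ν)
    (CP βP CQ βQ : ℝ) (hβP : βP ∈ Set.Ioo (0 : ℝ) 1) (hβQ : βQ ∈ Set.Ioo (0 : ℝ) 1)
    (hergP : ∀ (k : ℕ) (x : X) (f : X → ℝ), Measurable f → (∀ y, |f y| ≤ V y) →
      |kernelFunIter P k f x - ∫ y, f y ∂μ| ≤ CP * βP ^ k * V x)
    (hergQ : ∀ (k : ℕ) (x : X) (f : X → ℝ), Measurable f → (∀ y, |f y| ≤ V y) →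
      |kernelFunIter Q k f x - ∫ y, f y ∂ν| ≤ CQ * βQ ^ k * V x)
    (f : X → ℝ) (hfm : Measurable f) (hfV : ∃ c, ∀ x, |f x| ≤ c * V x) (x : X) :
    resolventFun Q ν f x - resolventFun P μ f x
      = resolventFun P μ
          (fun y => (∫ z, resolventFun Q ν f z ∂(Q y)) - ∫ z, resolventFun Q ν f z ∂(P y))
          x
        + ∫ y, resolventFun Q ν f y ∂μ :=
  stmt_14_general V hVm hV1 P Q μ ν hinvP CP βP CQ βQ hβP hβQ hergP hergQ f hfm hfV x
end

section
/- Let X be a measurable space with a sigma-finite measure lambda and V : X -> [1,infinity) measurable. Let mu and (mu_n) be probability measures with densities with respect to lambda such that mu_n(x) -> mu(x) for every x and ||mu_n - mu||_V -> 0. Let P be a Markov kernel with invariant distribution mu and (P_n) Markov kernels with invariant distributions mu_n, each V-geometrically ergodic with constants (C,beta) and (C_n,beta_n) satisfying max(C,1/(1-beta)) <= L and max(C_n,1/(1-beta_n)) <= L for a common L < infinity. Suppose that for every x in X there exist finite constants M_x and Mperp_x such that for all n, ||P(x,·) - P_n(x,·)||_V <= M_x * ||mu - mu_n||_V + Mperp_x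 * |mu(x) - mu_n(x)|. Then for every measurable f with ||f||_V <= 1 and every x in X, R_n f(x) -> R f(x) as n -> infinity, where R_n f(x) := sum over k >= 0 of (P_n^k f(x) - mu_n(f)) and R f(x) := sum over k >= 0 of (P^k f(x) - mu(f)). -/
/-!
Normalising the ergodicity constants to `(L, r)` with `r = 1 - L⁻¹` dominates the terms
`P_n^k f(x) - μ_n(f)` of `R_n f(x)` by the summable sequence `L r^k V(x)`, uniformly in `n`, so by
Tannery's theorem it suffices to show termwise convergence. Convergence `μ_n(f) → μ(f)` is the
`V`-norm hypothesis. For the iterates, the mean value inequality gives `P_n(y,·) → P(y,·)` in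
`V`-norm for every `y`, and an induction on `k` then yields `P_n^k f → P^k f` pointwise.
-/

open MeasureTheory ProbabilityTheory Filter ENNReal

open scoped Topology

lemma tendsto_zero_of_le_mul_add_mul_abs_sub {d e : ℕ → ℝ≥0∞} {u : ℕ → ℝ} {a M M' : ℝ}
    (he : Tendsto e atTop (𝓝 0)) (hu : Tendsto u atTop (𝓝 a))
    (hd : ∀ n, d n ≤ ENNReal.ofReal M * e n + ENNReal.ofReal (M' * |a - u n|)) :
    Tendsto d atTop (𝓝 0) := by
  have hsub : Tendsto (fun n => ENNReal.ofReal (M' * |a - u n|)) atTop (𝓝 0) := by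
    simpa using ENNReal.tendsto_ofReal ((hu.const_sub a).abs.const_mul M')
  have hbound := (ENNReal.Tendsto.const_mul he (Or.inr (ENNReal.ofReal_ne_top (r := M)))).add hsub
  rw [mul_zero, zero_add] at hbound
  exact tendsto_of_tendsto_of_tendsto_of_le_of_le tendsto_const_nhds hbound (fun _ => zero_le) hd

section

variable {X : Type*} [MeasurableSpace X] {V : X → ℝ}

lemma vDistE_comm (μ ν : Measure X) : vDistE V μ ν = vDistE V ν μ := by
  unfold vDistE
  simp_rw [abs_sub_comm]

lemma ofReal_abs_integral_sub_le_mul_vDistE (μ ν : Measure X) {g : X → ℝ} {c : ℝ}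
    (hg : Measurable g) (hc : 0 ≤ c) (hgV : ∀ z, |g z| ≤ c * V z) :
    ENNReal.ofReal |(∫ z, g z ∂μ) - ∫ z, g z ∂ν| ≤ ENNReal.ofReal c * vDistE V μ ν := by
  rcases hc.eq_or_lt with rfl | hc
  · have hg0 : g = 0 := funext fun z => abs_nonpos_iff.mp (by simpa using hgV z)
    simp [hg0]
  have hgc : ∀ z, |g z / c| ≤ V z := fun z => by
    rw [abs_div, abs_of_pos hc, div_le_iff₀ hc, mul_comm]
    exact hgV z
  have hsup : ENNReal.ofReal |(∫ z, g z / c ∂μ) - ∫ z, g z / c ∂ν| ≤ vDistE V μ ν :=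
    le_iSup_of_le (⟨fun z => g z / c, hg.div_const c, hgc⟩ :
      {f : X → ℝ // Measurable f ∧ ∀ x, |f x| ≤ V x}) le_rfl
  have hscale : |(∫ z, g z ∂μ) - ∫ z, g z ∂ν|
      = c * |(∫ z, g z / c ∂μ) - ∫ z, g z / c ∂ν| := by
    rw [integral_div, integral_div, ← sub_div, abs_div, abs_of_pos hc, mul_div_cancel₀ _ hc.ne']
  rw [hscale, ENNReal.ofReal_mul hc.le]
  gcongr

lemma tendsto_integral_sub_of_tendsto_vDistE {μ ν : ℕ → Measure X}
    (hμν : Tendsto (fun n => vDistE V (μ n) (ν n)) atTop (𝓝 0)) {g : ℕ → X → ℝ} {c : ℝ}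
    (hg : ∀ n, Measurable (g n)) (hc : 0 ≤ c) (hgV : ∀ n z, |g n z| ≤ c * V z) :
    Tendsto (fun n => (∫ z, g n z ∂(μ n)) - ∫ z, g n z ∂(ν n)) atTop (𝓝 0) := by
  have hbound : Tendsto (fun n => ENNReal.ofReal c * vDistE V (μ n) (ν n)) atTop (𝓝 0) := by
    simpa using ENNReal.Tendsto.const_mul hμν (Or.inr ENNReal.ofReal_ne_top)
  have habs : Tendsto (fun n => ENNReal.ofReal |(∫ z, g n z ∂(μ n)) - ∫ z, g n z ∂(ν n)|)
      atTop (𝓝 0) :=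
    tendsto_of_tendsto_of_tendsto_of_le_of_le tendsto_const_nhds hbound (fun _ => zero_le)
      fun n => ofReal_abs_integral_sub_le_mul_vDistE _ _ (hg n) hc (hgV n)
  rw [tendsto_zero_iff_abs_tendsto_zero]
  simpa [Function.comp_def] using (ENNReal.tendsto_toReal ENNReal.zero_ne_top).comp habs

lemma integrable_of_integral_min_le {ν : Measure X} [IsFiniteMeasure ν] (hVm : Measurable V)
    (hV0 : ∀ x, 0 ≤ V x) (K : ℝ) (hK : ∀ m : ℕ, ∫ z, min (V z) m ∂ν ≤ K) : Integrable V ν := by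
  have hmin0 : ∀ (m : ℕ) z, 0 ≤ min (V z) m := fun m z => le_min (hV0 z) m.cast_nonneg
  have hmin_int : ∀ m : ℕ, Integrable (fun z => min (V z) m) ν := fun m =>
    (integrable_const (m : ℝ)).mono' (hVm.min measurable_const).aestronglyMeasurable
      (ae_of_all _ fun z => by
        rw [Real.norm_eq_abs, abs_of_nonneg (hmin0 m z)]; exact min_le_right _ _)
  have hlim : Tendsto (fun m : ℕ => ∫⁻ z, ENNReal.ofReal (min (V z) m) ∂ν) atTop
      (𝓝 (∫⁻ z, ENNReal.ofReal (V z) ∂ν)) := by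
    refine lintegral_tendsto_of_tendsto_of_monotone
      (fun m => (hVm.min measurable_const).ennreal_ofReal.aemeasurable)
      (ae_of_all _ fun z a b hab => ENNReal.ofReal_le_ofReal
        (min_le_min le_rfl (Nat.cast_le.mpr hab)))
      (ae_of_all _ fun z => tendsto_const_nhds.congr' ?_)
    filter_upwards [eventually_ge_atTop ⌈V z⌉₊] with m hm
    rw [min_eq_left ((Nat.le_ceil _).trans (Nat.cast_le.mpr hm))]
  have hle : ∫⁻ z, ENNReal.ofReal (V z) ∂ν ≤ ENNReal.ofReal K :=
    le_of_tendsto' hlim fun m => by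
      rw [← ofReal_integral_eq_lintegral_ofReal (hmin_int m) (ae_of_all _ (hmin0 m))]
      exact ENNReal.ofReal_le_ofReal (hK m)
  refine ⟨hVm.aestronglyMeasurable, ?_⟩
  rw [hasFiniteIntegral_iff_ofReal (ae_of_all _ hV0)]
  exact hle.trans_lt ENNReal.ofReal_lt_top

section Ergodic

/-- `V`-geometric ergodicity with constants `(C, β)`, stated through test functions `|f| ≤ V`
(equivalent to `‖P^k(x,·) - μ‖_V ≤ C β^k V(x)`). -/
def IsVGeomErgodic_s18 (V : X → ℝ) (P : Kernel X X) (μ : Measure X) (C β : ℝ) : Prop :=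
  ∀ (k : ℕ) (x : X) (f : X → ℝ), Measurable f → (∀ y, |f y| ≤ V y) →
    |kernelFunIter P k f x - ∫ y, f y ∂μ| ≤ C * β ^ k * V x

variable {P : Kernel X X} {μ : Measure X} {C β : ℝ}

/-- `1 / (1 - β) ≤ L` says `β ≤ 1 - L⁻¹`, so a common bound on the constants gives a common
rate. -/
lemma IsVGeomErgodic_s18.of_max_le (h : IsVGeomErgodic_s18 V P μ C β) (hβ : β ∈ Set.Ioo 0 1)
    {L : ℝ} (hCL : max C (1 / (1 - β)) ≤ L) (hV0 : ∀ x, 0 ≤ V x) :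
    IsVGeomErgodic_s18 V P μ L (1 - L⁻¹) := by
  obtain ⟨hβ0, hβ1⟩ := hβ
  have hgap : 0 < 1 - β := sub_pos.mpr hβ1
  have hL : 1 / (1 - β) ≤ L := (le_max_right _ _).trans hCL
  have hL0 : 0 < L := (one_div_pos.mpr hgap).trans_le hL
  have hβr : β ≤ 1 - L⁻¹ := by
    rw [div_le_iff₀ hgap] at hL
    have : L⁻¹ ≤ 1 - β := by rw [inv_le_iff_one_le_mul₀ hL0]; linarith
    linarith
  have hr0 : 0 ≤ 1 - L⁻¹ := hβ0.le.trans hβr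
  intro k x f hf hfV
  have hCβ : C * β ^ k ≤ L * (1 - L⁻¹) ^ k :=
    calc C * β ^ k ≤ max C 0 * β ^ k := by gcongr; exact le_max_left _ _
      _ ≤ max C 0 * (1 - L⁻¹) ^ k := by gcongr
      _ ≤ L * (1 - L⁻¹) ^ k :=
        mul_le_mul_of_nonneg_right (max_le ((le_max_left _ _).trans hCL) hL0.le) (pow_nonneg hr0 k)
  exact (h k x f hf hfV).trans (by gcongr; exact hV0 x)

lemma IsVGeomErgodic_s18.abs_kernelFunIter_le (h : IsVGeomErgodic_s18 V P μ C β) (hC : 0 ≤ C)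
    (hβ0 : 0 ≤ β) (hβ1 : β ≤ 1) (hV1 : ∀ x, 1 ≤ V x) {f : X → ℝ} (hf : Measurable f)
    (hfV : ∀ y, |f y| ≤ V y) (x z : X) (k : ℕ) :
    |kernelFunIter P k f z| ≤ (C + (1 + C) * V x) * V z := by
  have hμf : |∫ y, f y ∂μ| ≤ (1 + C) * V x := by
    have h0 := h 0 x f hf hfV
    simp only [kernelFunIter, pow_zero, mul_one] at h0
    linarith [abs_sub_abs_le_abs_sub (∫ y, f y ∂μ) (f x), abs_sub_comm (∫ y, f y ∂μ) (f x),
      hfV x]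
  have hCβ : C * β ^ k * V z ≤ C * V z :=
    mul_le_mul_of_nonneg_right (mul_le_of_le_one_right hC (pow_le_one₀ hβ0 hβ1))
      (by linarith [hV1 z])
  have hμfz : (1 + C) * V x ≤ (1 + C) * V x * V z :=
    le_mul_of_one_le_right (by nlinarith [hV1 x]) (hV1 z)
  linarith [h k z f hf hfV, abs_sub_abs_le_abs_sub (kernelFunIter P k f z) (∫ y, f y ∂μ)]

/-- Ergodicity makes `V` integrable against every `P(y,·)`: truncations `min V m` are admissible
test functions, and the bounds at `k = 0, 1` control `∫ min V m dP(y,·)` uniformly in `m`. -/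
lemma IsVGeomErgodic_s18.integrable [IsFiniteKernel P] (h : IsVGeomErgodic_s18 V P μ C β)
    (hVm : Measurable V) (hV0 : ∀ x, 0 ≤ V x) (y : X) : Integrable V (P y) := by
  refine integrable_of_integral_min_le hVm hV0 ((1 + C + C * β) * V y) fun m => ?_
  have hm : Measurable fun z => min (V z) (m : ℝ) := hVm.min measurable_const
  have hmV : ∀ z, |min (V z) (m : ℝ)| ≤ V z := fun z => by
    rw [abs_of_nonneg (le_min (hV0 z) m.cast_nonneg)]; exact min_le_left _ _
  have h0 := abs_le.mp (h 0 y _ hm hmV)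
  have h1 := abs_le.mp (h 1 y _ hm hmV)
  simp only [kernelFunIter, pow_zero, pow_one, mul_one] at h0 h1
  linarith [min_le_left (V y) m]

end Ergodic

lemma measurable_kernelFunIter_s18 (P : Kernel X X) [IsSFiniteKernel P] {f : X → ℝ}
    (hf : Measurable f) : ∀ k, Measurable (kernelFunIter P k f)
  | 0 => hf
  | k + 1 =>
    ((measurable_kernelFunIter_s18 P hf k).comp measurable_snd).stronglyMeasurable
      |>.integral_kernel_prod_right' (κ := P) |>.measurable

/-- Induction on `k`: `P_n^{k+1} f(y) - P^{k+1} f(y)` splits into `(P_n(y,·) - P(y,·))(P_n^k f)`,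
small by the `V`-norm convergence, and `P(y,·)(P_n^k f - P^k f)`, small by dominated convergence. -/
theorem tendsto_kernelFunIter_of_tendsto_vDistE {P : Kernel X X} {Pn : ℕ → Kernel X X}
    (hPn : ∀ n, IsSFiniteKernel (Pn n)) (hVint : ∀ y, Integrable V (P y))
    (hconv : ∀ y, Tendsto (fun n => vDistE V (P y) (Pn n y)) atTop (𝓝 0))
    {f : X → ℝ} (hf : Measurable f) {B : ℝ} (hB : 0 ≤ B)
    (hbound : ∀ n k z, |kernelFunIter (Pn n) k f z| ≤ B * V z) (k : ℕ) (y : X) :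
    Tendsto (fun n => kernelFunIter (Pn n) k f y) atTop (𝓝 (kernelFunIter P k f y)) := by
  induction k generalizing y with
  | zero => exact tendsto_const_nhds
  | succ k ih =>
    have hm : ∀ n, Measurable (kernelFunIter (Pn n) k f) := fun n =>
      haveI := hPn n; measurable_kernelFunIter_s18 (Pn n) hf k
    have hstep := tendsto_integral_sub_of_tendsto_vDistE (hconv y) hm hB (fun n => hbound n k)
    have hdom : Tendsto (fun n => ∫ z, kernelFunIter (Pn n) k f z ∂(P y)) atTop
        (𝓝 (∫ z, kernelFunIter P k f z ∂(P y))) :=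
      tendsto_integral_of_dominated_convergence (fun z => B * V z)
        (fun n => (hm n).aestronglyMeasurable) ((hVint y).const_mul B)
        (fun n => ae_of_all _ fun z => hbound n k z) (ae_of_all _ ih)
    simpa [kernelFunIter] using hdom.sub hstep

theorem tendsto_resolventFun {P : Kernel X X} {Pn : ℕ → Kernel X X} {μ : Measure X}
    {μn : ℕ → Measure X} {L r : ℝ} (hr0 : 0 ≤ r) (hr1 : r < 1)
    (hPn : ∀ n, IsVGeomErgodic_s18 V (Pn n) (μn n) L r) {f : X → ℝ} (hf : Measurable f)
    (hfV : ∀ y, |f y| ≤ V y) {x : X}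
    (hiter : ∀ k, Tendsto (fun n => kernelFunIter (Pn n) k f x) atTop
      (𝓝 (kernelFunIter P k f x)))
    (hμf : Tendsto (fun n => ∫ y, f y ∂(μn n)) atTop (𝓝 (∫ y, f y ∂μ))) :
    Tendsto (fun n => resolventFun (Pn n) (μn n) f x) atTop (𝓝 (resolventFun P μ f x)) :=
  tendsto_tsum_of_dominated_convergence
    (((summable_geometric_of_lt_one hr0 hr1).mul_left L).mul_right (V x))
    (fun k => (hiter k).sub hμf) (Eventually.of_forall fun n k => hPn n k x f hf hfV)

end

theorem stmt_18_general {X : Type*} [MeasurableSpace X]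
    (V : X → ℝ) (hVm : Measurable V) (hV1 : ∀ x, 1 ≤ V x)
    (p : X → ℝ) (pn : ℕ → X → ℝ)
    (μ : Measure X) (μn : ℕ → Measure X)
    (hptwise : ∀ x, Tendsto (fun n => pn n x) atTop (nhds (p x)))
    (hVconv : Tendsto (fun n => vDistE V (μn n) μ) atTop (nhds 0))
    (P : Kernel X X) [IsMarkovKernel P]
    (Pn : ℕ → Kernel X X) (hPnm : ∀ n, IsMarkovKernel (Pn n))
    (L : ℝ)
    (hergP : ∃ C β : ℝ, β ∈ Set.Ioo (0 : ℝ) 1 ∧ max C (1 / (1 - β)) ≤ L ∧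
      ∀ (k : ℕ) (x : X) (f : X → ℝ), Measurable f → (∀ y, |f y| ≤ V y) →
        |kernelFunIter P k f x - ∫ y, f y ∂μ| ≤ C * β ^ k * V x)
    (hergPn : ∀ n, ∃ C β : ℝ, β ∈ Set.Ioo (0 : ℝ) 1 ∧ max C (1 / (1 - β)) ≤ L ∧
      ∀ (k : ℕ) (x : X) (f : X → ℝ), Measurable f → (∀ y, |f y| ≤ V y) →
        |kernelFunIter (Pn n) k f x - ∫ y, f y ∂(μn n)| ≤ C * β ^ k * V x)
    (hMV : ∀ x : X, ∃ Mx Mpx : ℝ, ∀ n,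
      vDistE V (P x) ((Pn n) x)
        ≤ ENNReal.ofReal Mx * vDistE V μ (μn n)
          + ENNReal.ofReal (Mpx * |p x - pn n x|)) :
    ∀ f : X → ℝ, Measurable f → (∀ x, |f x| ≤ V x) → ∀ x : X,
      Tendsto (fun n => resolventFun (Pn n) (μn n) f x) atTop
        (nhds (resolventFun P μ f x)) := by
  intro f hf hfV x
  have hV0 : ∀ x, 0 ≤ V x := fun x => zero_le_one.trans (hV1 x)
  obtain ⟨C, β, hβ, hCL, hP⟩ := hergP
  have hL : 1 < L := (one_lt_one_div (sub_pos.mpr hβ.2) (by linarith [hβ.1])).trans_le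
    ((le_max_right _ _).trans hCL)
  have hr0 : 0 ≤ 1 - L⁻¹ := sub_nonneg.mpr (inv_le_one_of_one_le₀ hL.le)
  have hr1 : 1 - L⁻¹ < 1 := sub_lt_self _ (inv_pos.mpr (by linarith))
  have hPn : ∀ n, IsVGeomErgodic_s18 V (Pn n) (μn n) L (1 - L⁻¹) := fun n => by
    obtain ⟨Cn, βn, hβn, hCnL, hPn⟩ := hergPn n
    exact IsVGeomErgodic_s18.of_max_le hPn hβn hCnL hV0
  have hker : ∀ y, Tendsto (fun n => vDistE V (P y) (Pn n y)) atTop (𝓝 0) := fun y => by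
    obtain ⟨M, M', hM⟩ := hMV y
    refine tendsto_zero_of_le_mul_add_mul_abs_sub ?_ (hptwise y) hM
    simpa only [vDistE_comm (μn _) μ] using hVconv
  have hiter := tendsto_kernelFunIter_of_tendsto_vDistE (fun n => haveI := hPnm n; inferInstance)
    ((IsVGeomErgodic_s18.of_max_le hP hβ hCL hV0).integrable hVm hV0) hker hf
    (by nlinarith [hV1 x] : 0 ≤ L + (1 + L) * V x)
    (fun n k z => (hPn n).abs_kernelFunIter_le (by linarith) hr0 hr1.le hV1 hf hfV x z k)
  have hμf : Tendsto (fun n => ∫ y, f y ∂(μn n)) atTop (𝓝 (∫ y, f y ∂μ)) := by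
    have := tendsto_integral_sub_of_tendsto_vDistE hVconv (g := fun _ => f) (fun _ => hf)
      zero_le_one (fun _ z => (one_mul (V z)).symm ▸ hfV z)
    simpa using this.add_const (∫ y, f y ∂μ)
  exact tendsto_resolventFun hr0 hr1 hPn hf hfV (fun k => hiter k x) hμf

/-- **Pointwise convergence of Poisson resolvents.**
If `μ_n → μ` pointwise in density and in `V`-norm, `P` and `P_n` are Markov kernels with
invariant distributions `μ` and `μ_n`, uniformly `V`-geometrically ergodic (constants
bounded by `L`), and the bounded-derivative mean value inequality
`‖P(x,·) - P_n(x,·)‖_V ≤ M_x ‖μ - μ_n‖_V + M⊥_x |μ(x) - μ_n(x)|` holds for every `x`,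
then for every measurable `f` with `‖f‖_V ≤ 1` and every `x`,
`R_n f(x) → R f(x)`, where `R_n, R` are the Poisson resolvents of `P_n, P`. -/
theorem stmt_18 {X : Type*} [MeasurableSpace X]
    (lam : Measure X) [SigmaFinite lam]
    (V : X → ℝ) (hVm : Measurable V) (hV1 : ∀ x, 1 ≤ V x)
    (p : X → ℝ) (pn : ℕ → X → ℝ)
    (hpm : Measurable p) (hpnm : ∀ n, Measurable (pn n))
    (hp0 : ∀ x, 0 ≤ p x) (hpn0 : ∀ n x, 0 ≤ pn n x)
    (μ : Measure X) (μn : ℕ → Measure X)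
    (hμ : μ = lam.withDensity fun x => ENNReal.ofReal (p x))
    (hμn : ∀ n, μn n = lam.withDensity fun x => ENNReal.ofReal (pn n x))
    [IsProbabilityMeasure μ] (hμnprob : ∀ n, IsProbabilityMeasure (μn n))
    (hptwise : ∀ x, Tendsto (fun n => pn n x) atTop (nhds (p x)))
    (hVconv : Tendsto (fun n => vDistE V (μn n) μ) atTop (nhds 0))
    (P : Kernel X X) [IsMarkovKernel P] (hPinv : μ.bind (fun x => P x) = μ)
    (Pn : ℕ → Kernel X X) (hPnm : ∀ n, IsMarkovKernel (Pn n))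
    (hPninv : ∀ n, (μn n).bind (fun x => (Pn n) x) = μn n)
    (L : ℝ)
    (hergP : ∃ C β : ℝ, β ∈ Set.Ioo (0 : ℝ) 1 ∧ max C (1 / (1 - β)) ≤ L ∧
      ∀ (k : ℕ) (x : X) (f : X → ℝ), Measurable f → (∀ y, |f y| ≤ V y) →
        |kernelFunIter P k f x - ∫ y, f y ∂μ| ≤ C * β ^ k * V x)
    (hergPn : ∀ n, ∃ C β : ℝ, β ∈ Set.Ioo (0 : ℝ) 1 ∧ max C (1 / (1 - β)) ≤ L ∧
      ∀ (k : ℕ) (x : X) (f : X → ℝ), Measurable f → (∀ y, |f y| ≤ V y) →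
        |kernelFunIter (Pn n) k f x - ∫ y, f y ∂(μn n)| ≤ C * β ^ k * V x)
    (hMV : ∀ x : X, ∃ Mx Mpx : ℝ, ∀ n,
      vDistE V (P x) ((Pn n) x)
        ≤ ENNReal.ofReal Mx * vDistE V μ (μn n)
          + ENNReal.ofReal (Mpx * |p x - pn n x|)) :
    ∀ f : X → ℝ, Measurable f → (∀ x, |f x| ≤ V x) → ∀ x : X,
      Tendsto (fun n => resolventFun (Pn n) (μn n) f x) atTop
        (nhds (resolventFun P μ f x)) :=
  stmt_18_general V hVm hV1 p pn μ μn hptwise hVconv P Pn hPnm L hergP hergPn hMV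
end

section
/- Let phibar > 0, let gamma be a real number with 0 < gamma <= 2*phibar, let n >= 1, let a_1,...,a_n be positive reals, and let m_1,...,m_n be reals with |m_i| <= phibar for all i. Define h(x) := sum_{i=1}^n a_i * exp(-(x - m_i)^2). Then: (i) for all real x, y with 2*phibar <= x <= y, one has h(x)/h(y) >= exp(gamma*(y - x)), i.e. log h(x) - log h(y) >= gamma*(y - x); and (ii) for all real x, y with y <= x <= -2*phibar, one has h(x)/h(y) >= exp(gamma*(x - y)), i.e. log h(x) - log h(y) >= gamma*(x - y). -/
open Real

lemma stmt19_key (n : ℕ) (hn : 1 ≤ n) (a : Fin n → ℝ) (ha : ∀ i, 0 < a i)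
    (f g : Fin n → ℝ) (e : ℝ)
    (hfg : ∀ i, Real.exp e * (a i * Real.exp (g i)) ≤ a i * Real.exp (f i)) :
    (∑ i, a i * Real.exp (f i)) / (∑ i, a i * Real.exp (g i)) ≥ Real.exp e ∧
    Real.log (∑ i, a i * Real.exp (f i)) - Real.log (∑ i, a i * Real.exp (g i)) ≥ e := by
  have hne : (Finset.univ : Finset (Fin n)).Nonempty := by
    simpa [Finset.univ_nonempty_iff] using Fin.pos_iff_nonempty.mp hn
  have hT : 0 < ∑ i, a i * Real.exp (g i) :=
    Finset.sum_pos (fun i _ => mul_pos (ha i) (Real.exp_pos _)) hne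
  have hS : 0 < ∑ i, a i * Real.exp (f i) :=
    Finset.sum_pos (fun i _ => mul_pos (ha i) (Real.exp_pos _)) hne
  have hmain : Real.exp e * (∑ i, a i * Real.exp (g i)) ≤ ∑ i, a i * Real.exp (f i) := by
    rw [Finset.mul_sum]
    exact Finset.sum_le_sum fun i _ => hfg i
  constructor
  · rw [ge_iff_le, le_div_iff₀ hT]
    exact hmain
  · have := Real.log_le_log (by positivity) hmain
    rw [Real.log_mul (Real.exp_ne_zero _) (ne_of_gt hT), Real.log_exp] at this
    linarith

/-- **Uniform log-concavity in the tails of a finite Gaussian-shaped mixture.**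
If `h x = ∑ i, a i * exp (-(x - m i)^2)` with `a i > 0` and `|m i| ≤ phibar`, and
`0 < γ ≤ 2 * phibar`, then for `2*phibar ≤ x ≤ y` one has
`h x / h y ≥ exp (γ * (y - x))`, i.e. `log (h x) - log (h y) ≥ γ * (y - x)`, and for
`y ≤ x ≤ -2*phibar` one has `h x / h y ≥ exp (γ * (x - y))`, i.e.
`log (h x) - log (h y) ≥ γ * (x - y)`. -/
theorem stmt_19 (phibar γ : ℝ) (hphi : 0 < phibar) (hγ0 : 0 < γ) (hγ : γ ≤ 2 * phibar)
    (n : ℕ) (hn : 1 ≤ n) (a m : Fin n → ℝ) (ha : ∀ i, 0 < a i) (hm : ∀ i, |m i| ≤ phibar) :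
    (∀ x y : ℝ, 2 * phibar ≤ x → x ≤ y →
      (∑ i, a i * Real.exp (-(x - m i) ^ 2)) / (∑ i, a i * Real.exp (-(y - m i) ^ 2))
          ≥ Real.exp (γ * (y - x)) ∧
        Real.log (∑ i, a i * Real.exp (-(x - m i) ^ 2)) -
            Real.log (∑ i, a i * Real.exp (-(y - m i) ^ 2)) ≥ γ * (y - x)) ∧
    (∀ x y : ℝ, y ≤ x → x ≤ -(2 * phibar) →
      (∑ i, a i * Real.exp (-(x - m i) ^ 2)) / (∑ i, a i * Real.exp (-(y - m i) ^ 2))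
          ≥ Real.exp (γ * (x - y)) ∧
        Real.log (∑ i, a i * Real.exp (-(x - m i) ^ 2)) -
            Real.log (∑ i, a i * Real.exp (-(y - m i) ^ 2)) ≥ γ * (x - y)) := by
  constructor
  · intro x y hx hxy
    apply stmt19_key n hn a ha _ _ _ (fun i => ?_)
    rw [mul_left_comm, ← Real.exp_add]
    have hmi := abs_le.mp (hm i)
    have : γ * (y - x) + -(y - m i) ^ 2 ≤ -(x - m i) ^ 2 := by nlinarith
    exact mul_le_mul_of_nonneg_left (Real.exp_le_exp.mpr this) (le_of_lt (ha i))
  · intro x y hyx hx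
    apply stmt19_key n hn a ha _ _ _ (fun i => ?_)
    rw [mul_left_comm, ← Real.exp_add]
    have hmi := abs_le.mp (hm i)
    have : γ * (x - y) + -(y - m i) ^ 2 ≤ -(x - m i) ^ 2 := by nlinarith
    exact mul_le_mul_of_nonneg_left (Real.exp_le_exp.mpr this) (le_of_lt (ha i))
end
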